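/- The 2-coin algorithm, which at each loop flips a coin choosing branch 1 with probability c1/(c1+c2) and branch 2 with probability c2/(c1+c2), then in branch 1 returns 1 with probability p1 (else loops) and in branch 2 returns 0 with probability p2 (else loops), returns 1 with probability c1*p1/(c1*p1 + c2*p2). -/

import Mathlib

/-- The 2-coin algorithm returns 1 with probability `c1*p1/(c1*p1+c2*p2)`:
each loop returns 1 with probability `c1*p1/(c1+c2)`, terminates with probability
`(c1*p1+c2*p2)/(c1+c2)`, and otherwise repeats independently; summing the geometric
series over the number of loops gives the result. -/
theorem two_coin_returns_one
    (c1 c2 p1 p2 : ℝ) (hc1 : 0 < c1) (hc2 : 0 < c2)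
    (hp1 : p1 ∈ Set.Ioc (0 : ℝ) 1) (hp2 : p2 ∈ Set.Ioc (0 : ℝ) 1)
    (hpos : 0 < c1 * p1 + c2 * p2) :
    (∑' k : ℕ, (1 - (c1 * p1 + c2 * p2) / (c1 + c2)) ^ k * (c1 * p1 / (c1 + c2)))
      = c1 * p1 / (c1 * p1 + c2 * p2) := by
  have hcc : (0:ℝ) < c1 + c2 := by linarith
  have hr : |1 - (c1 * p1 + c2 * p2) / (c1 + c2)| < 1 := by
    rw [abs_lt]
    constructor
    · have : (c1 * p1 + c2 * p2) / (c1 + c2) ≤ 1 := by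
        rw [div_le_one hcc]
        nlinarith [hp1.2, hp2.2, hc1.le, hc2.le]
      linarith
    · have : 0 < (c1 * p1 + c2 * p2) / (c1 + c2) := div_pos hpos hcc
      linarith
  rw [tsum_mul_right, tsum_geometric_of_abs_lt_one hr]
  field_simp [hpos.ne', hcc.ne']
  ring
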